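/- Fix λ > 0 and let C = {θ ∈ ℝⁿ : θ₁ ≤ θ₂ ≤ ⋯ ≤ θ_n and θ_n − θ₁ ≤ λ} be the bounded isotonic constraint set, written as C = {θ : Aθ ≤ b} where for 1 ≤ i ≤ n−1 row a_i has +1 in position i, −1 in position i+1 and b_i = 0, and row a_n has +1 in position n, −1 in position 1 and b_n = λ. Let θ̂_λ(y) = P_C(y) and J_y = {1 ≤ i ≤ n : ⟨a_i, θ̂_λ(y)⟩ = b_i}. Let G_{J_y} be the undirected graph on vertices {1,…,n} with an edge between i and i+1 for each i ∈ J_y ∩ {1,…,n−1} and an edge between n and 1 if n ∈ J_y. Then for Lebesgue-almost every y ∈ ℝⁿ, θ̂_λ is differentiable at y and its divergence equals the number of connected components of G_{J_y}: D(y) = ω(G_{J_y}). -/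

import Mathlib

open Matrix MeasureTheory

/-- The divergence of a map `ℝⁿ → ℝⁿ` at `y`: the trace of its derivative,
`∑ i, ∂fᵢ/∂yᵢ (y)`. -/
noncomputable def divg {n : ℕ} (f : (Fin n → ℝ) → (Fin n → ℝ)) (y : Fin n → ℝ) : ℝ :=
  ∑ i, fderiv ℝ f y (Pi.single i 1) i

/-!
Write `C = {θ | ∀ i, ⟪a i, θ⟫ ≤ b i}` with the cyclic differences `a i`. As `λ > 0`, not every
constraint is active, and every proper subfamily of the `a i` is linearly independent. For such a
polyhedron, `y - P_C y = ∑ j ∈ J, c j • a j` with `c ≥ 0` on the active set `J`, and `c j = 0`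
confines `y` to a translate of a proper subspace. Off this null set all multipliers are positive,
and then near `y` the projection is the affine map `y' ↦ P_C y + Π (y' - y)`, where `Π` is the
orthogonal projection onto `V_J = {x | ∀ j ∈ J, ⟪a j, x⟫ = 0}`. So the divergence is
`tr Π = dim V_J`, and `V_J` is the kernel of the Laplacian of `G_J`, whose dimension is the number
of connected components.
-/

open Filter Topology Submodule WithLp
open scoped RealInnerProductSpace

section NearestPoint

variable {F : Type*} [NormedAddCommGroup F] [InnerProductSpace ℝ F]

def IsMetricProjection (K : Set F) (p : F → F) : Prop :=
  ∀ y, p y ∈ K ∧ ∀ θ ∈ K, ‖y - p y‖ ≤ ‖y - θ‖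

variable {K : Set F} {p : F → F}

theorem IsMetricProjection.inner_sub_nonpos (hp : IsMetricProjection K p) (hK : Convex ℝ K)
    (y : F) {θ : F} (hθ : θ ∈ K) : ⟪y - p y, θ - p y⟫ ≤ 0 := by
  have : Nonempty K := ⟨⟨θ, hθ⟩⟩
  refine (norm_eq_iInf_iff_real_inner_le_zero hK (hp y).1).1 (le_antisymm ?_ ?_) θ hθ
  · exact le_ciInf fun w => (hp y).2 w w.2
  · exact ciInf_le (f := fun w : K => ‖y - w‖) ⟨0, Set.forall_mem_range.2 fun _ => norm_nonneg _⟩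
      ⟨p y, (hp y).1⟩

theorem IsMetricProjection.eq_of_inner_sub_nonpos (hp : IsMetricProjection K p)
    (hK : Convex ℝ K) {y x : F} (hx : x ∈ K) (hVI : ∀ θ ∈ K, ⟪y - x, θ - x⟫ ≤ 0) :
    p y = x := by
  have h₁ := hVI (p y) (hp y).1
  have h₂ := hp.inner_sub_nonpos hK y hx
  rw [← sub_eq_zero, ← real_inner_self_nonpos]
  calc ⟪p y - x, p y - x⟫ = ⟪y - x, p y - x⟫ + ⟪y - p y, x - p y⟫ := by
        simp only [inner_sub_left, inner_sub_right, real_inner_comm]; ring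
    _ ≤ 0 := add_nonpos h₁ h₂

end NearestPoint

theorem hasFDerivAt_of_eventually_eq_add {𝕜 E F : Type*} [NontriviallyNormedField 𝕜]
    [NormedAddCommGroup E] [NormedSpace 𝕜 E] [NormedAddCommGroup F] [NormedSpace 𝕜 F]
    {f : E → F} {L : E →L[𝕜] F} {y : E}
    (h : ∀ᶠ z in 𝓝 y, f z = f y + L (z - y)) : HasFDerivAt f L y := by
  have : HasFDerivAt (fun z => f y + L (z - y)) L y := by
    simpa using ((L.hasFDerivAt).comp y ((hasFDerivAt_id y).sub_const y)).const_add (f y)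
  exact this.congr_of_eventuallyEq h

section Span

variable {E : Type*} [NormedAddCommGroup E] [InnerProductSpace ℝ E] {ι : Type*} {a : ι → E}

theorem mem_orthogonal_span_image_iff {s : Set ι} {v : E} :
    v ∈ (span ℝ (a '' s))ᗮ ↔ ∀ i ∈ s, ⟪a i, v⟫ = 0 := by
  refine ⟨fun h i hi => inner_right_of_mem_orthogonal (subset_span (Set.mem_image_of_mem a hi)) h,
    fun h => (mem_orthogonal _ _).2 fun u hu => ?_⟩
  induction hu using span_induction with
  | mem x hx => obtain ⟨i, hi, rfl⟩ := hx; exact h i hi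
  | zero => exact inner_zero_left _
  | add x y _ _ hx hy => rw [inner_add_left, hx, hy, add_zero]
  | smul c x _ hx => rw [real_inner_smul_left, hx, mul_zero]

variable [DecidableEq ι]

theorem LinearIndepOn.apply_notMem_span_erase {J : Finset ι} (hind : LinearIndepOn ℝ a J)
    {j : ι} (hj : j ∈ J) : a j ∉ span ℝ (a '' (J.erase j)) := by
  rw [Finset.coe_erase, (hind.mono Set.sdiff_subset).notMem_span_iff, Set.insert_sdiff_singleton,
    Set.insert_eq_of_mem (Finset.mem_coe.2 hj)]
  exact ⟨hind, fun h => h.2 rfl⟩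

theorem LinearIndepOn.exists_inner_eq_ite [FiniteDimensional ℝ E] {J : Finset ι}
    (hind : LinearIndepOn ℝ a J) {j : ι} (hj : j ∈ J) :
    ∃ d : E, ∀ k ∈ J, ⟪a k, d⟫ = if k = j then 1 else 0 := by
  set U := span ℝ (a '' (J.erase j))
  set w := a j - U.starProjection (a j)
  have hwU : w ∈ Uᗮ := sub_starProjection_mem_orthogonal _
  have hw : ⟪w, w⟫ ≠ 0 := by
    rw [ne_eq, inner_self_eq_zero, sub_eq_zero]
    exact fun h => hind.apply_notMem_span_erase hj (h ▸ starProjection_apply_mem U _)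
  refine ⟨⟪w, w⟫⁻¹ • w, fun k hk => ?_⟩
  rw [real_inner_smul_right]
  split_ifs with hkj
  · subst hkj
    have : ⟪a k, w⟫ = ⟪w, w⟫ := by
      conv_lhs => rw [← sub_add_cancel (a k) (U.starProjection (a k))]
      rw [inner_add_left, inner_right_of_mem_orthogonal (starProjection_apply_mem U _) hwU,
        add_zero]
    rw [this, inv_mul_cancel₀ hw]
  · have hkU : a k ∈ U := subset_span (Set.mem_image_of_mem a (Finset.mem_erase.2 ⟨hkj, hk⟩))
    rw [inner_right_of_mem_orthogonal hkU hwU, mul_zero]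

theorem eq_sum_inner_smul_of_mem_span {J : Finset ι} {d : ι → E}
    (hd : ∀ j ∈ J, ∀ k ∈ J, ⟪a k, d j⟫ = if k = j then 1 else 0) {w : E}
    (hw : w ∈ span ℝ (a '' J)) : w = ∑ j ∈ J, ⟪w, d j⟫ • a j := by
  induction hw using span_induction with
  | mem x hx =>
    obtain ⟨k, hk, rfl⟩ := hx
    rw [Finset.sum_congr rfl fun j hj => by rw [hd j hj k hk]]
    simp [ite_smul, Finset.mem_coe.1 hk]
  | zero => simp
  | add x y _ _ hx hy =>
    simp only [inner_add_left, add_smul, Finset.sum_add_distrib]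
    rw [← hx, ← hy]
  | smul c x _ hx =>
    simp only [real_inner_smul_left, mul_smul, ← Finset.smul_sum]
    rw [← hx]

theorem orthogonal_sup_span_erase_ne_top {J : Finset ι} (hind : LinearIndepOn ℝ a J) {j : ι}
    (hj : j ∈ J) : (span ℝ (a '' J))ᗮ ⊔ span ℝ (a '' (J.erase j)) ≠ ⊤ := by
  intro htop
  have haj : a j ∈ (span ℝ (a '' J))ᗮ ⊔ span ℝ (a '' (J.erase j)) := htop ▸ mem_top
  obtain ⟨v, hv, u, hu, hvu⟩ := mem_sup.1 haj
  have hvW : v ∈ span ℝ (a '' J) := by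
    rw [eq_sub_of_add_eq hvu]
    refine sub_mem (subset_span (Set.mem_image_of_mem a hj)) (span_mono ?_ hu)
    exact Set.image_mono (Finset.coe_subset.2 (Finset.erase_subset j J))
  have hv0 : v ∈ span ℝ (a '' J) ⊓ (span ℝ (a '' J))ᗮ := ⟨hvW, hv⟩
  rw [inf_orthogonal_eq_bot, Submodule.mem_bot] at hv0
  rw [hv0, zero_add] at hvu
  exact hind.apply_notMem_span_erase hj (hvu ▸ hu)

end Span

section Polyhedron

variable {E : Type*} [NormedAddCommGroup E] [InnerProductSpace ℝ E] {ι : Type*}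

def polyhedron (a : ι → E) (b : ι → ℝ) : Set E := {x | ∀ i, ⟪a i, x⟫ ≤ b i}

theorem convex_polyhedron (a : ι → E) (b : ι → ℝ) : Convex ℝ (polyhedron a b) := by
  have : polyhedron a b = ⋂ i, {x | ⟪a i, x⟫ ≤ b i} := by ext; simp [polyhedron]
  rw [this]
  exact convex_iInter fun i =>
    convex_halfSpace_le ⟨inner_add_right _, fun c x => real_inner_smul_right _ _ _⟩ _

theorem IsMetricProjection.eq_of_sub_eq_sum_smul {a : ι → E} {b : ι → ℝ} {p : E → E}
    (hp : IsMetricProjection (polyhedron a b) p) {x y : E} (hx : x ∈ polyhedron a b)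
    {J : Finset ι} (hJ : ∀ j ∈ J, ⟪a j, x⟫ = b j) {c : ι → ℝ} (hc : ∀ j ∈ J, 0 ≤ c j)
    (hyx : y - x = ∑ j ∈ J, c j • a j) : p y = x := by
  refine hp.eq_of_inner_sub_nonpos (convex_polyhedron a b) hx fun θ hθ => ?_
  rw [hyx, sum_inner]
  refine Finset.sum_nonpos fun j hj => ?_
  rw [real_inner_smul_left, inner_sub_right, hJ j hj]
  exact mul_nonpos_of_nonneg_of_nonpos (hc j hj) (sub_nonpos.2 (hθ j))

variable [Fintype ι]

open Classical in
noncomputable def activeSet (a : ι → E) (b : ι → ℝ) (x : E) : Finset ι :=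
  {i | ⟪a i, x⟫ = b i}

variable {a : ι → E} {b : ι → ℝ}

theorem mem_activeSet {x : E} {i : ι} : i ∈ activeSet a b x ↔ ⟪a i, x⟫ = b i := by
  simp [activeSet]

theorem eventually_add_smul_mem_polyhedron {x d : E} (hx : x ∈ polyhedron a b)
    (hd : ∀ j ∈ activeSet a b x, ⟪a j, d⟫ ≤ 0) :
    ∀ᶠ t in 𝓝[>] (0 : ℝ), x + t • d ∈ polyhedron a b := by
  refine eventually_all.2 fun i => ?_
  by_cases hi : i ∈ activeSet a b x
  · filter_upwards [self_mem_nhdsWithin] with t (ht : 0 < t)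
    rw [inner_add_right, inner_smul_right, mem_activeSet.1 hi]
    nlinarith [hd i hi]
  · have hlt : ⟪a i, x + (0 : ℝ) • d⟫ < b i := by
      rw [zero_smul, add_zero]
      exact (hx i).lt_of_ne (mt mem_activeSet.2 hi)
    have hcont : Continuous fun t : ℝ => ⟪a i, x + t • d⟫ := by fun_prop
    exact nhdsWithin_le_nhds <|
      ((hcont.tendsto 0).eventually_lt_const hlt).mono fun _ => le_of_lt

theorem IsMetricProjection.inner_nonpos_of_active {p : E → E}
    (hp : IsMetricProjection (polyhedron a b) p) (y : E) {d : E}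
    (hd : ∀ j ∈ activeSet a b (p y), ⟪a j, d⟫ ≤ 0) : ⟪y - p y, d⟫ ≤ 0 := by
  obtain ⟨t, hmem, ht⟩ :=
    ((eventually_add_smul_mem_polyhedron (hp y).1 hd).and self_mem_nhdsWithin).exists
  have := hp.inner_sub_nonpos (convex_polyhedron a b) y hmem
  rw [add_sub_cancel_left, inner_smul_right] at this
  exact nonpos_of_mul_nonpos_right this ht

theorem IsMetricProjection.sub_mem_span_active [FiniteDimensional ℝ E] {p : E → E}
    (hp : IsMetricProjection (polyhedron a b) p) (y : E) :
    y - p y ∈ span ℝ (a '' activeSet a b (p y)) := by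
  set W := span ℝ (a '' activeSet a b (p y))
  rw [← W.orthogonal_orthogonal, mem_orthogonal']
  intro v hv
  have hperp : ∀ j ∈ activeSet a b (p y), ⟪a j, v⟫ = 0 := fun j hj =>
    inner_right_of_mem_orthogonal (subset_span (Set.mem_image_of_mem a hj)) hv
  have h₁ := hp.inner_nonpos_of_active y (d := v) fun j hj => (hperp j hj).le
  have h₂ := hp.inner_nonpos_of_active y (d := -v) fun j hj => by
    rw [inner_neg_right, hperp j hj, neg_zero]
  rw [inner_neg_right] at h₂
  linarith

variable [DecidableEq ι] [FiniteDimensional ℝ E] {p : E → E}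

theorem IsMetricProjection.inner_pos_of_notMem_span_erase
    (hp : IsMetricProjection (polyhedron a b) p) {y : E} {d : ι → E}
    (hd : ∀ j ∈ activeSet a b (p y), ∀ k ∈ activeSet a b (p y),
      ⟪a k, d j⟫ = if k = j then 1 else 0)
    {j : ι} (hj : j ∈ activeSet a b (p y))
    (hstrict : y - p y ∉ span ℝ (a '' ((activeSet a b (p y)).erase j))) :
    0 < ⟪y - p y, d j⟫ := by
  have hnonneg := hp.inner_nonpos_of_active y (d := -d j) fun k hk => by
    rw [inner_neg_right, hd j hj k hk]
    split_ifs <;> norm_num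
  rw [inner_neg_right, neg_nonpos] at hnonneg
  refine hnonneg.lt_of_ne fun h0 => hstrict ?_
  rw [eq_sum_inner_smul_of_mem_span hd (hp.sub_mem_span_active y),
    ← Finset.sum_erase_add _ _ hj, ← h0, zero_smul, add_zero]
  exact sum_mem fun k hk => smul_mem _ _ (subset_span (Set.mem_image_of_mem a hk))

/- The candidate `T y` keeps the active constraints tight and, for `y` near `y₀`, the inactive
ones slack and the coefficients of `y - T y` on the active normals positive; so `T y` satisfies
the KKT conditions. -/
theorem IsMetricProjection.eventually_eq_add_starProjection
    (hp : IsMetricProjection (polyhedron a b) p) {y₀ : E}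
    (hind : LinearIndepOn ℝ a (activeSet a b (p y₀)))
    (hstrict : ∀ j ∈ activeSet a b (p y₀),
      y₀ - p y₀ ∉ span ℝ (a '' ((activeSet a b (p y₀)).erase j))) :
    ∀ᶠ y in 𝓝 y₀, p y = p y₀ + (span ℝ (a '' activeSet a b (p y₀)))ᗮ.starProjection (y - y₀) := by
  set J := activeSet a b (p y₀)
  set W := span ℝ (a '' J)
  set T := fun y => p y₀ + Wᗮ.starProjection (y - y₀)
  choose! d hd using fun j (hj : j ∈ J) => hind.exists_inner_eq_ite hj
  have hT_active (y : E) : ∀ j ∈ J, ⟪a j, T y⟫ = b j := fun j hj => by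
    rw [inner_add_right, mem_activeSet.1 hj, inner_right_of_mem_orthogonal
      (subset_span (Set.mem_image_of_mem a hj)) (starProjection_apply_mem _ _), add_zero]
  have hT₀ : T y₀ = p y₀ := by simp [T]
  have hres_mem (y : E) : y - T y ∈ W := by
    have hproj := sub_starProjection_mem_orthogonal (K := Wᗮ) (y - y₀)
    rw [W.orthogonal_orthogonal] at hproj
    rw [show y - T y = (y₀ - p y₀) + ((y - y₀) - Wᗮ.starProjection (y - y₀)) by
      simp only [T]; abel]
    exact add_mem (hp.sub_mem_span_active y₀) hproj
  have hev_coef : ∀ᶠ y in 𝓝 y₀, ∀ j ∈ J, 0 < ⟪y - T y, d j⟫ := by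
    refine (eventually_all_finset J).2 fun j hj => ?_
    have hcont : Continuous fun y => ⟪y - T y, d j⟫ := by fun_prop
    refine (hcont.tendsto y₀).eventually_const_lt ?_
    rw [hT₀]
    exact hp.inner_pos_of_notMem_span_erase hd hj (hstrict j hj)
  have hev_inactive : ∀ᶠ y in 𝓝 y₀, ∀ i ∉ J, ⟪a i, T y⟫ < b i := by
    refine eventually_all.2 fun i => ?_
    by_cases hi : i ∈ J
    · exact Eventually.of_forall fun _ h => absurd hi h
    have hcont : Continuous fun y => ⟪a i, T y⟫ := by fun_prop
    have hlt : ⟪a i, T y₀⟫ < b i := hT₀ ▸ ((hp y₀).1 i).lt_of_ne (mt mem_activeSet.2 hi)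
    exact ((hcont.tendsto y₀).eventually_lt_const hlt).mono fun _ h _ => h
  filter_upwards [hev_coef, hev_inactive] with y hcoef hinact
  have hTmem : T y ∈ polyhedron a b := fun i =>
    if hi : i ∈ J then (hT_active y i hi).le else (hinact i hi).le
  exact hp.eq_of_sub_eq_sum_smul hTmem (hT_active y) (fun j hj => (hcoef j hj).le)
    (eq_sum_inner_smul_of_mem_span hd (hres_mem y))

variable [MeasurableSpace E] [BorelSpace E] (μ : Measure E) [μ.IsAddHaarMeasure]

/- The points whose multiplier on the active constraint `j` vanishes; they lie in a translate of
the proper subspace `(span (a '' J))ᗮ ⊔ span (a '' J.erase j)`. -/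
theorem measure_degenerate_eq_zero
    (hind : ∀ x ∈ polyhedron a b, LinearIndepOn ℝ a (activeSet a b x)) (J : Finset ι) (j : ι) :
    μ {y | ∃ x ∈ polyhedron a b, activeSet a b x = J ∧ j ∈ J ∧
      y - x ∈ span ℝ (a '' (J.erase j))} = 0 := by
  rcases Set.eq_empty_or_nonempty {y | ∃ x ∈ polyhedron a b, activeSet a b x = J ∧ j ∈ J ∧
      y - x ∈ span ℝ (a '' (J.erase j))} with h | ⟨-, x₁, hx₁, rfl, hj, -⟩
  · rw [h, measure_empty]
  set S := (span ℝ (a '' activeSet a b x₁))ᗮ ⊔ span ℝ (a '' ((activeSet a b x₁).erase j))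
  refine measure_mono_null (t := (fun y => -x₁ + y) ⁻¹' S) ?_ ?_
  · rintro y ⟨x, -, hJ, -, hy⟩
    have hface : x - x₁ ∈ (span ℝ (a '' activeSet a b x₁))ᗮ := by
      refine mem_orthogonal_span_image_iff.2 fun k hk => ?_
      rw [inner_sub_right, mem_activeSet.1 hk, mem_activeSet.1 (hJ ▸ hk : k ∈ activeSet a b x),
        sub_self]
    show -x₁ + y ∈ S
    rw [show -x₁ + y = (y - x) + (x - x₁) by abel]
    exact add_mem (mem_sup_right hy) (mem_sup_left hface)
  · rw [measure_preimage_add]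
    exact Measure.addHaar_submodule μ S (orthogonal_sup_span_erase_ne_top (hind x₁ hx₁) hj)

theorem IsMetricProjection.ae_hasFDerivAt_polyhedron
    (hp : IsMetricProjection (polyhedron a b) p)
    (hind : ∀ x ∈ polyhedron a b, LinearIndepOn ℝ a (activeSet a b x)) :
    ∀ᵐ y ∂μ, HasFDerivAt p (span ℝ (a '' activeSet a b (p y)))ᗮ.starProjection y := by
  have hstrict : ∀ᵐ y ∂μ, ∀ j ∈ activeSet a b (p y),
      y - p y ∉ span ℝ (a '' ((activeSet a b (p y)).erase j)) := by
    rw [ae_iff]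
    refine measure_mono_null ?_ (measure_iUnion_null fun J =>
      measure_iUnion_null fun j => measure_degenerate_eq_zero μ hind J j)
    intro y hy
    push Not at hy
    obtain ⟨j, hj, hmem⟩ := hy
    exact Set.mem_iUnion₂.2 ⟨_, j, p y, (hp y).1, rfl, hj, hmem⟩
  filter_upwards [hstrict] with y hy
  exact hasFDerivAt_of_eventually_eq_add
    (hp.eventually_eq_add_starProjection (hind _ (hp y).1) hy)

end Polyhedron

theorem Submodule.trace_starProjection {𝕜 E : Type*} [RCLike 𝕜] [NormedAddCommGroup E]
    [InnerProductSpace 𝕜 E] [FiniteDimensional 𝕜 E] (K : Submodule 𝕜 E) :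
    LinearMap.trace 𝕜 E K.starProjection = Module.finrank 𝕜 K :=
  LinearMap.IsProj.trace ⟨K.starProjection_apply_mem, fun _ => starProjection_eq_self_iff.2⟩

section EuclideanCoordinates

variable {n : ℕ}

theorem HasFDerivAt.divg_eq_trace {f : (Fin n → ℝ) → (Fin n → ℝ)} {y : Fin n → ℝ}
    {P : EuclideanSpace ℝ (Fin n) →L[ℝ] EuclideanSpace ℝ (Fin n)}
    (h : HasFDerivAt (fun z => toLp 2 (f (ofLp z))) P (toLp 2 y)) :
    DifferentiableAt ℝ f y ∧ divg f y = LinearMap.trace ℝ (EuclideanSpace ℝ (Fin n)) P := by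
  set e := EuclideanSpace.equiv (Fin n) ℝ
  have hf : HasFDerivAt f ((e : _ →L[ℝ] _).comp (P.comp (e.symm : _ →L[ℝ] _))) y :=
    e.hasFDerivAt.comp y (h.comp y e.symm.hasFDerivAt)
  refine ⟨hf.differentiableAt, ?_⟩
  rw [divg, hf.fderiv, LinearMap.trace_eq_sum_inner _ (EuclideanSpace.basisFun _ ℝ)]
  simp [e, EuclideanSpace.inner_single_left]

theorem isMetricProjection_toLp {C : Set (Fin n → ℝ)} {K : Set (EuclideanSpace ℝ (Fin n))}
    (hCK : ∀ θ, θ ∈ C ↔ toLp 2 θ ∈ K) {θhat : (Fin n → ℝ) → (Fin n → ℝ)}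
    (hproj : ∀ y, θhat y ∈ C ∧ ∀ θ ∈ C, ∑ j, (y j - θhat y j) ^ 2 ≤ ∑ j, (y j - θ j) ^ 2) :
    IsMetricProjection K fun z => toLp 2 (θhat (ofLp z)) := by
  intro z
  refine ⟨(hCK _).1 (hproj _).1, fun θ hθ => ?_⟩
  have hθC : ofLp θ ∈ C := (hCK _).2 (by simpa using hθ)
  simp only [EuclideanSpace.norm_eq, Real.norm_eq_abs, sq_abs]
  exact Real.sqrt_le_sqrt (by simpa using (hproj (ofLp z)).2 _ hθC)

end EuclideanCoordinates

section BoundedIsotonic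

variable {m : ℕ}

theorem Fin.apply_eq_apply_zero_of_forall_apply_add_one {α : Type*} {f : Fin (m + 1) → α}
    (h : ∀ k, f (k + 1) = f k) (k : Fin (m + 1)) : f k = f 0 := by
  induction k using Fin.induction with
  | zero => rfl
  | succ i ih => rw [← Fin.coeSucc_eq_succ, h, ih]

/- Here `n = m + 1` and index `i` stands for `i + 1`; the constraint at `Fin.last m` is the
wrap-around one `θ_n - θ_1 ≤ λ`, as `Fin.last m + 1 = 0`. -/
noncomputable def cyclicDiff (i : Fin (m + 1)) : EuclideanSpace ℝ (Fin (m + 1)) :=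
  EuclideanSpace.single i 1 - EuclideanSpace.single (i + 1) 1

def cyclicBound (lam : ℝ) (i : Fin (m + 1)) : ℝ :=
  if i = Fin.last m then lam else 0

theorem inner_cyclicDiff (i : Fin (m + 1)) (x : EuclideanSpace ℝ (Fin (m + 1))) :
    ⟪cyclicDiff i, x⟫ = x i - x (i + 1) := by
  simp [cyclicDiff, inner_sub_left, EuclideanSpace.inner_single_left]

theorem toLp_mem_polyhedron_cyclic_iff {lam : ℝ} (θ : Fin (m + 1) → ℝ) :
    toLp 2 θ ∈ polyhedron cyclicDiff (cyclicBound lam) ↔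
      (∀ i : ℕ, ∀ h : i + 1 < m + 1, θ ⟨i, by omega⟩ ≤ θ ⟨i + 1, h⟩) ∧
        θ ⟨m + 1 - 1, by omega⟩ - θ ⟨0, by omega⟩ ≤ lam := by
  simp only [polyhedron, Set.mem_ofPred_eq, inner_cyclicDiff, cyclicBound]
  rw [Fin.forall_fin_succ']
  simp [Fin.castSucc_ne_last, Fin.coeSucc_eq_succ, Fin.forall_iff]
  exact fun _ => Iff.rfl

-- The `⟪a i, x⟫` sum to `0` while the `b i` sum to `λ`.
theorem activeSet_cyclic_ne_univ {lam : ℝ} (hlam : 0 < lam) (x : EuclideanSpace ℝ (Fin (m + 1))) :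
    activeSet cyclicDiff (cyclicBound lam) x ≠ Finset.univ := by
  intro h
  have hsum : ∑ i, ⟪cyclicDiff i, x⟫ = ∑ i, cyclicBound lam i :=
    Finset.sum_congr rfl fun i _ => mem_activeSet.1 (h ▸ Finset.mem_univ i)
  have hrot : ∑ i, x (i + 1) = ∑ i, x i :=
    Equiv.sum_comp (Equiv.addRight (1 : Fin (m + 1))) fun i => x i
  simp [inner_cyclicDiff, Finset.sum_sub_distrib, hrot, cyclicBound] at hsum
  linarith

theorem linearIndepOn_cyclicDiff {J : Finset (Fin (m + 1))} (hJ : J ≠ Finset.univ) :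
    LinearIndepOn ℝ cyclicDiff (J : Set (Fin (m + 1))) := by
  obtain ⟨i₀, hi₀⟩ : ∃ i₀, i₀ ∉ J := by
    by_contra! h
    exact hJ (Finset.eq_univ_iff_forall.2 h)
  rw [linearIndepOn_iff]
  intro l hl hsum
  rw [Finsupp.linearCombination_apply, Finsupp.sum_fintype _ _ (by simp)] at hsum
  have hstep (k : Fin (m + 1)) : l (k + 1) = l k := by
    have := congrArg (fun x : EuclideanSpace ℝ (Fin (m + 1)) => x (k + 1)) hsum
    simpa [cyclicDiff, mul_sub, Finset.sum_sub_distrib, Pi.single_apply, sub_eq_zero] using this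
  have hzero : l i₀ = 0 := Finsupp.notMem_support_iff.1 fun h => hi₀ (hl h)
  ext k
  rw [Fin.apply_eq_apply_zero_of_forall_apply_add_one hstep k,
    ← Fin.apply_eq_apply_zero_of_forall_apply_add_one hstep i₀, hzero, Finsupp.zero_apply]

def cyclicGraph (J : Finset (Fin (m + 1))) : SimpleGraph (Fin (m + 1)) :=
  SimpleGraph.fromRel fun u v => u ∈ J ∧ v = u + 1

theorem forall_adj_cyclicGraph_iff {J : Finset (Fin (m + 1))} {x : Fin (m + 1) → ℝ} :
    (∀ u v, (cyclicGraph J).Adj u v → x u = x v) ↔ ∀ j ∈ J, x j = x (j + 1) := by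
  constructor
  · intro h j hj
    by_cases hjj : j = j + 1
    · rw [← hjj]
    · exact h _ _ ((SimpleGraph.fromRel_adj _ _ _).2 ⟨hjj, Or.inl ⟨hj, rfl⟩⟩)
  · rintro h u v ⟨-, ⟨hu, rfl⟩ | ⟨hv, rfl⟩⟩
    · exact h u hu
    · exact (h v hv).symm

open Classical in
theorem finrank_orthogonal_span_cyclicDiff (J : Finset (Fin (m + 1))) :
    Module.finrank ℝ (span ℝ (cyclicDiff '' (J : Set (Fin (m + 1)))))ᗮ =
      Nat.card (cyclicGraph J).ConnectedComponent := by
  have : (span ℝ (cyclicDiff '' (J : Set (Fin (m + 1)))))ᗮ =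
      (LinearMap.ker (Matrix.toLin' ((cyclicGraph J).lapMatrix ℝ))).comap
        (WithLp.linearEquiv 2 ℝ (Fin (m + 1) → ℝ) :
          EuclideanSpace ℝ (Fin (m + 1)) →ₗ[ℝ] Fin (m + 1) → ℝ) := by
    ext x
    rw [mem_orthogonal_span_image_iff, Submodule.mem_comap, LinearMap.mem_ker,
      Matrix.toLin'_apply, SimpleGraph.lapMatrix_mulVec_eq_zero_iff_forall_adj,
      forall_adj_cyclicGraph_iff]
    simp [inner_cyclicDiff, sub_eq_zero]
  rw [this, Nat.card_eq_fintype_card,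
    SimpleGraph.card_connectedComponent_eq_finrank_ker_toLin'_lapMatrix,
    comap_equiv_eq_map_symm, LinearEquiv.finrank_map_eq]

theorem isotonicRel_iff_mem_activeSet {lam : ℝ} (θ : Fin (m + 1) → ℝ) (u v : Fin (m + 1)) :
      ((∃ i : ℕ, ∃ h : i + 1 < m + 1, u = ⟨i, by omega⟩ ∧ v = ⟨i + 1, h⟩ ∧
        θ ⟨i, by omega⟩ = θ ⟨i + 1, h⟩) ∨
      (u = ⟨m + 1 - 1, by omega⟩ ∧ v = ⟨0, by omega⟩ ∧
        θ ⟨m + 1 - 1, by omega⟩ - θ ⟨0, by omega⟩ = lam)) ↔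
      u ∈ activeSet cyclicDiff (cyclicBound lam) (toLp 2 θ) ∧ v = u + 1 := by
  rw [mem_activeSet, inner_cyclicDiff, cyclicBound, PiLp.toLp_apply, PiLp.toLp_apply]
  have hlast : (⟨m + 1 - 1, by omega⟩ : Fin (m + 1)) = Fin.last m := Fin.ext (by simp)
  constructor
  · rintro (⟨i, h, rfl, rfl, hθ⟩ | ⟨rfl, rfl, hθ⟩)
    · have hsucc : (⟨i, by omega⟩ + 1 : Fin (m + 1)) = ⟨i + 1, h⟩ :=
        Fin.ext (Fin.val_add_one_of_lt' h)
      rw [hsucc, if_neg (Fin.ne_of_val_ne (by simp; omega)), hθ, sub_self]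
      exact ⟨rfl, rfl⟩
    · rw [hlast, if_pos rfl, Fin.last_add_one]
      exact ⟨hθ, rfl⟩
  · rintro ⟨hu, rfl⟩
    by_cases hul : u = Fin.last m
    · subst hul
      rw [if_pos rfl, Fin.last_add_one] at hu
      exact Or.inr ⟨hlast.symm, Fin.last_add_one m, by rwa [hlast]⟩
    · have h : (u : ℕ) + 1 < m + 1 := by
        have := Fin.val_lt_last hul; omega
      have hsucc : u + 1 = ⟨u + 1, h⟩ := Fin.ext (Fin.val_add_one_of_lt' h)
      rw [if_neg hul, sub_eq_zero, hsucc] at hu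
      exact Or.inl ⟨u, h, rfl, hsucc, hu⟩

theorem fromRel_isotonic_eq_cyclicGraph {lam : ℝ} (θ : Fin (m + 1) → ℝ) :
    SimpleGraph.fromRel (fun u v : Fin (m + 1) =>
      (∃ i : ℕ, ∃ h : i + 1 < m + 1, u = ⟨i, by omega⟩ ∧ v = ⟨i + 1, h⟩ ∧
        θ ⟨i, by omega⟩ = θ ⟨i + 1, h⟩) ∨
      (u = ⟨m + 1 - 1, by omega⟩ ∧ v = ⟨0, by omega⟩ ∧
        θ ⟨m + 1 - 1, by omega⟩ - θ ⟨0, by omega⟩ = lam)) =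
      cyclicGraph (activeSet cyclicDiff (cyclicBound lam) (toLp 2 θ)) := by
  rw [cyclicGraph]
  congr
  funext u v
  exact propext (isotonicRel_iff_mem_activeSet θ u v)


/-- For the metric projection `θ̂_λ` onto the bounded isotonic set
`C = {θ : θ₁ ≤ ⋯ ≤ θ_n, θ_n − θ₁ ≤ λ}`, for almost every `y` the map `θ̂_λ` is
differentiable at `y` and its divergence equals the number of connected components of
the graph `G_{J_y}` on `{1,…,n}` whose edges are the binding constraints:
an edge `{i, i+1}` whenever `θ̂_λ(y)_i = θ̂_λ(y)_{i+1}`, and an edge `{n, 1}` whenever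
`θ̂_λ(y)_n − θ̂_λ(y)_1 = λ`. -/
theorem divergence_bounded_isotonic {n : ℕ} (hn : 0 < n) (lam : ℝ) (hlam : 0 < lam)
    (C : Set (Fin n → ℝ))
    (hC : C = {θ | (∀ i : ℕ, ∀ h : i + 1 < n, θ ⟨i, by omega⟩ ≤ θ ⟨i + 1, h⟩) ∧
      θ ⟨n - 1, by omega⟩ - θ ⟨0, hn⟩ ≤ lam})
    (θhat : (Fin n → ℝ) → (Fin n → ℝ))
    (hproj : ∀ y, θhat y ∈ C ∧ ∀ θ ∈ C, ∑ j, (y j - θhat y j) ^ 2 ≤ ∑ j, (y j - θ j) ^ 2) :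
    ∀ᵐ y ∂(volume : Measure (Fin n → ℝ)), DifferentiableAt ℝ θhat y ∧
      divg θhat y =
        (Nat.card (SimpleGraph.fromRel (fun u v : Fin n =>
          (∃ i : ℕ, ∃ h : i + 1 < n, u = ⟨i, by omega⟩ ∧ v = ⟨i + 1, h⟩ ∧
            θhat y ⟨i, by omega⟩ = θhat y ⟨i + 1, h⟩) ∨
          (u = ⟨n - 1, by omega⟩ ∧ v = ⟨0, hn⟩ ∧
            θhat y ⟨n - 1, by omega⟩ - θhat y ⟨0, hn⟩ = lam))).ConnectedComponent : ℝ) := by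
  obtain ⟨m, rfl⟩ : ∃ m, n = m + 1 := ⟨n - 1, by omega⟩
  have hp : IsMetricProjection (polyhedron cyclicDiff (cyclicBound lam))
      fun z => toLp 2 (θhat (ofLp z)) :=
    isMetricProjection_toLp (fun θ => by rw [hC, toLp_mem_polyhedron_cyclic_iff]; rfl) hproj
  filter_upwards [(PiLp.volume_preserving_toLp (Fin (m + 1))).quasiMeasurePreserving.ae
    (hp.ae_hasFDerivAt_polyhedron volume fun x _ =>
      linearIndepOn_cyclicDiff (activeSet_cyclic_ne_univ hlam x))]
    with y hy
  obtain ⟨hdiff, hdivg⟩ := hy.divg_eq_trace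
  refine ⟨hdiff, ?_⟩
  rw [hdivg, Submodule.trace_starProjection, finrank_orthogonal_span_cyclicDiff,
    fromRel_isotonic_eq_cyclicGraph]
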